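/- Let H1 and H2 be Hermitian, and let η_k ∈ R for k = 0,...,m−1. Then ‖exp(iτ(Σ_k η_k H1 ⊗ |k⟩⟨k| + H2 ⊗ I_m)) − exp(iτ H2 ⊗ I_m) exp(iτ Σ_k η_k H1 ⊗ |k⟩⟨k|)‖ ≤ (τ²/2) max_k |η_k| ‖[H1, H2]‖. -/

import Mathlib

/-!
For skew-adjoint `X`, `Y` in a C⋆-algebra, interpolate with
`G s = exp (s X) exp (s Y) exp (-s (X + Y))`. Then `G 0 = 1`, `G 1 * exp (X + Y) = exp X exp Y`,
and `G' s = exp (s X) [X, exp (s Y)] exp (-s (X + Y))`. All exponentials are unitary, and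
`‖[X, exp (s Y)]‖ ≤ |s| ‖[X, Y]‖` because `u ↦ exp (-u Y) X exp (u Y)` has derivative of norm
`‖[X, Y]‖`; integrating `‖G' s‖ ≤ s ‖[X, Y]‖` over `[0, 1]` gives
`‖exp (X + Y) - exp X exp Y‖ ≤ ‖[X, Y]‖ / 2`.

Here `X = iτ H₂ ⊗ I` and `Y = iτ H₁ ⊗ diag η`, so `[X, Y] = -τ² [H₂, H₁] ⊗ diag η`. Finally
`‖A ⊗ B‖ ≤ ‖A‖ ‖B‖`, since `A ↦ A ⊗ I` and `B ↦ I ⊗ B` are ⋆-homomorphisms between C⋆-algebras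
and hence contractive.
-/

open Matrix
open scoped Matrix.Norms.L2Operator

noncomputable section

/-- Kronecker product realized on `Fin (a*b)`, first factor most significant. -/
def kron {a b : ℕ} (A : Matrix (Fin a) (Fin a) ℂ) (B : Matrix (Fin b) (Fin b) ℂ) :
    Matrix (Fin (a * b)) (Fin (a * b)) ℂ :=
  Matrix.reindex finProdFinEquiv finProdFinEquiv (Matrix.kroneckerMap (· * ·) A B)

section Trotter

open NormedSpace

variable {A : Type*} [CStarAlgebra A]

lemma commute_exp_smul (X : A) (s : ℝ) : Commute X (exp (s • X)) :=
  ((Commute.refl X).smul_right s).exp_right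

variable {X Y : A}

lemma exp_smul_mem_unitary (hX : X ∈ skewAdjoint A) (s : ℝ) : exp (s • X) ∈ unitary A :=
  letI : NormedAlgebra ℚ A := .restrictScalars ℚ ℂ A
  exp_mem_unitary_of_mem_skewAdjoint (skewAdjoint.smul_mem s hX)

lemma star_exp_smul (hX : X ∈ skewAdjoint A) (s : ℝ) : star (exp (s • X)) = exp (s • -X) := by
  rw [star_exp, star_smul, star_trivial, skewAdjoint.mem_iff.mp hX]

lemma norm_commutator_exp_smul_le (hY : Y ∈ skewAdjoint A) (X : A) (s : ℝ) :
    ‖X * exp (s • Y) - exp (s • Y) * X‖ ≤ ‖X * Y - Y * X‖ * |s| := by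
  set f : ℝ → A := fun u => exp (u • -Y) * X * exp (u • Y)
  have hf : ∀ u, HasDerivAt f (exp (u • -Y) * (X * Y - Y * X) * exp (u • Y)) u := by
    intro u
    refine (((hasDerivAt_exp_smul_const' (-Y) u).mul_const X).mul
      (hasDerivAt_exp_smul_const' Y u)).congr_deriv ?_
    rw [(commute_exp_smul (-Y) u).eq]
    noncomm_ring
  have hbound : ∀ u : ℝ, ‖exp (u • -Y) * (X * Y - Y * X) * exp (u • Y)‖ = ‖X * Y - Y * X‖ := by
    intro u
    rw [CStarRing.norm_mul_mem_unitary _ (exp_smul_mem_unitary hY u), ← star_exp_smul hY,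
      CStarRing.norm_mem_unitary_mul _ (Unitary.star_mem (exp_smul_mem_unitary hY u))]
  have hmvt : ‖f s - f 0‖ ≤ ‖X * Y - Y * X‖ * ‖s - 0‖ :=
    convex_univ.norm_image_sub_le_of_norm_hasDerivWithin_le
      (fun u _ => (hf u).hasDerivWithinAt) (fun u _ => (hbound u).le) trivial trivial
  have hconj : X * exp (s • Y) - exp (s • Y) * X = exp (s • Y) * (f s - f 0) := by
    have hf0 : f 0 = X := by simp [f]
    rw [hf0, mul_sub, ← mul_assoc, ← mul_assoc, ← star_exp_smul hY,
      Unitary.mul_star_self_of_mem (exp_smul_mem_unitary hY s), one_mul]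
  rw [hconj, CStarRing.norm_mem_unitary_mul _ (exp_smul_mem_unitary hY s)]
  simpa using hmvt

theorem norm_exp_add_sub_exp_mul_exp_le (hX : X ∈ skewAdjoint A) (hY : Y ∈ skewAdjoint A) :
    ‖exp (X + Y) - exp X * exp Y‖ ≤ ‖X * Y - Y * X‖ / 2 := by
  set C := ‖X * Y - Y * X‖
  have hXY : X + Y ∈ skewAdjoint A := add_mem hX hY
  set G : ℝ → A := fun s => exp (s • X) * exp (s • Y) * exp (s • -(X + Y))
  set G' : ℝ → A := fun s => exp (s • X) * (X * exp (s • Y) - exp (s • Y) * X) * exp (s • -(X + Y))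
  have hG : ∀ s, HasDerivAt G (G' s) s := by
    intro s
    refine (((hasDerivAt_exp_smul_const' X s).mul (hasDerivAt_exp_smul_const' Y s)).mul
      (hasDerivAt_exp_smul_const' (-(X + Y)) s)).congr_deriv ?_
    simp only [G', Pi.mul_apply]
    rw [(commute_exp_smul X s).eq, (commute_exp_smul Y s).eq]
    noncomm_ring
  have hG' : ∀ s : ℝ, ‖G' s‖ ≤ C * |s| := by
    intro s
    rw [CStarRing.norm_mul_mem_unitary _ (exp_smul_mem_unitary (neg_mem hXY) s),
      CStarRing.norm_mem_unitary_mul _ (exp_smul_mem_unitary hX s)]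
    exact norm_commutator_exp_smul_le hY X s
  have hG1 : ‖G 1 - G 0‖ ≤ C * 1 ^ 2 / 2 := by
    refine image_norm_le_of_norm_deriv_right_le_deriv_boundary (f := fun s => G s - G 0) (f' := G')
      (B := fun s => C * s ^ 2 / 2) (B' := fun s => C * s) ?_ (fun s _ => ?_) (by simp)
      (fun s => ?_) (fun s hs => ?_) ⟨zero_le_one, le_rfl⟩
    · exact (continuous_iff_continuousAt.2 fun s => (hG s).continuousAt).continuousOn.sub
        continuousOn_const
    · exact ((hG s).sub_const (G 0)).hasDerivWithinAt
    · exact (((hasDerivAt_pow 2 s).const_mul C).div_const 2).congr_deriv (by norm_num; ring)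
    · simpa [abs_of_nonneg hs.1] using hG' s
  have hsplit : exp (X + Y) - exp X * exp Y = (G 0 - G 1) * exp (X + Y) := by
    have hinv : exp (-(X + Y)) * exp (X + Y) = 1 := by
      have h := Unitary.star_mul_self_of_mem (exp_smul_mem_unitary hXY 1)
      rwa [star_exp_smul hXY, one_smul, one_smul] at h
    simp only [G, zero_smul, exp_zero, one_smul, mul_one, sub_mul, one_mul, mul_assoc, hinv]
  rw [hsplit, CStarRing.norm_mul_mem_unitary _ (by simpa using exp_smul_mem_unitary hXY 1),
    norm_sub_rev]
  simpa using hG1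

end Trotter

section Kron

variable {a b : ℕ}

@[simp]
lemma kron_apply_finProdFinEquiv (A : Matrix (Fin a) (Fin a) ℂ) (B : Matrix (Fin b) (Fin b) ℂ)
    (i j : Fin a) (k l : Fin b) :
    kron A B (finProdFinEquiv (i, k)) (finProdFinEquiv (j, l)) = A i j * B k l := by
  simp [kron]

lemma kron_ext {M M' : Matrix (Fin (a * b)) (Fin (a * b)) ℂ}
    (h : ∀ i j k l, M (finProdFinEquiv (i, k)) (finProdFinEquiv (j, l)) =
      M' (finProdFinEquiv (i, k)) (finProdFinEquiv (j, l))) : M = M' := by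
  ext p q
  obtain ⟨⟨i, k⟩, rfl⟩ := finProdFinEquiv.surjective p
  obtain ⟨⟨j, l⟩, rfl⟩ := finProdFinEquiv.surjective q
  exact h i j k l

lemma kron_mul (A A' : Matrix (Fin a) (Fin a) ℂ) (B B' : Matrix (Fin b) (Fin b) ℂ) :
    kron A B * kron A' B' = kron (A * A') (B * B') := by
  rw [kron, kron, kron, reindex_apply, reindex_apply, reindex_apply, submatrix_mul_equiv,
    ← mul_kronecker_mul]

lemma kron_conjTranspose (A : Matrix (Fin a) (Fin a) ℂ) (B : Matrix (Fin b) (Fin b) ℂ) :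
    (kron A B)ᴴ = kron Aᴴ Bᴴ := by
  rw [kron, kron, reindex_apply, reindex_apply, conjTranspose_submatrix, conjTranspose_kronecker]

lemma kron_one_one : kron (1 : Matrix (Fin a) (Fin a) ℂ) (1 : Matrix (Fin b) (Fin b) ℂ) = 1 := by
  rw [kron, one_kronecker_one, reindex_apply, submatrix_one_equiv]

lemma sum_smul_kron_single {m : ℕ} (A : Matrix (Fin a) (Fin a) ℂ) (v : Fin m → ℂ) :
    ∑ k, v k • kron A (single k k 1) = kron A (diagonal v) := by
  refine kron_ext fun i j k l => ?_
  simp [Matrix.sum_apply, single_apply, diagonal_apply, ite_and, Finset.sum_ite_eq', mul_comm]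

variable (a b) in
def kronOneStarAlgHom : Matrix (Fin a) (Fin a) ℂ →⋆ₐ[ℂ] Matrix (Fin (a * b)) (Fin (a * b)) ℂ where
  toFun A := kron A 1
  map_one' := kron_one_one
  map_mul' A A' := by rw [kron_mul, mul_one]
  map_zero' := by simp [kron]
  map_add' A A' := kron_ext fun i j k l => by simp [add_mul]
  commutes' r := kron_ext fun i j k l => by
    simp [algebraMap_eq_diagonal, diagonal_apply, one_apply, ← ite_and, and_comm]
  map_star' A := by simp [star_eq_conjTranspose, kron_conjTranspose]

variable (a b) in
def oneKronStarAlgHom : Matrix (Fin b) (Fin b) ℂ →⋆ₐ[ℂ] Matrix (Fin (a * b)) (Fin (a * b)) ℂ where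
  toFun B := kron 1 B
  map_one' := kron_one_one
  map_mul' B B' := by rw [kron_mul, mul_one]
  map_zero' := by simp [kron]
  map_add' B B' := kron_ext fun i j k l => by simp [mul_add]
  commutes' r := kron_ext fun i j k l => by
    simp [algebraMap_eq_diagonal, diagonal_apply, one_apply, ← ite_and, and_comm]
  map_star' B := by simp [star_eq_conjTranspose, kron_conjTranspose]

lemma norm_kron_le (A : Matrix (Fin a) (Fin a) ℂ) (B : Matrix (Fin b) (Fin b) ℂ) :
    ‖kron A B‖ ≤ ‖A‖ * ‖B‖ := by
  have hfactor : kron A B = kronOneStarAlgHom a b A * oneKronStarAlgHom a b B := by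
    simp [kronOneStarAlgHom, oneKronStarAlgHom, kron_mul]
  rw [hfactor]
  exact (norm_mul_le _ _).trans (mul_le_mul (NonUnitalStarAlgHom.norm_apply_le _ A)
    (NonUnitalStarAlgHom.norm_apply_le _ B) (norm_nonneg _) (norm_nonneg _))

lemma kron_sub_left (A A' : Matrix (Fin a) (Fin a) ℂ) (B : Matrix (Fin b) (Fin b) ℂ) :
    kron (A - A') B = kron A B - kron A' B :=
  kron_ext fun i j k l => by simp [sub_mul]

lemma kron_one_mul_sub_mul_kron_one (A B : Matrix (Fin a) (Fin a) ℂ)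
    (D : Matrix (Fin b) (Fin b) ℂ) :
    kron B 1 * kron A D - kron A D * kron B 1 = kron (B * A - A * B) D := by
  rw [kron_mul, kron_mul, one_mul, mul_one, kron_sub_left]

lemma isSelfAdjoint_kron {A : Matrix (Fin a) (Fin a) ℂ} {B : Matrix (Fin b) (Fin b) ℂ}
    (hA : IsSelfAdjoint A) (hB : IsSelfAdjoint B) : IsSelfAdjoint (kron A B) := by
  rw [IsSelfAdjoint, star_eq_conjTranspose, kron_conjTranspose, ← star_eq_conjTranspose,
    ← star_eq_conjTranspose, hA.star_eq, hB.star_eq]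

end Kron

lemma norm_diagonal_ofReal_le {ι : Type*} [Fintype ι] [DecidableEq ι] (η : ι → ℝ) :
    ‖(diagonal fun k => (η k : ℂ) : Matrix ι ι ℂ)‖ ≤ ⨆ k, |η k| := by
  rw [l2_opNorm_diagonal, pi_norm_le_iff_of_nonneg (Real.iSup_nonneg fun k => abs_nonneg _)]
  intro k
  rw [Complex.norm_real, Real.norm_eq_abs]
  exact le_ciSup (f := fun k => |η k|) (Set.finite_range _).bddAbove k

/-- Trotter splitting across the auxiliary register. -/
theorem stmt_9 (N m : ℕ) (H1 H2 : Matrix (Fin N) (Fin N) ℂ)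
    (h1 : H1.IsHermitian) (h2 : H2.IsHermitian) (η : Fin m → ℝ) (τ : ℝ) :
    ‖NormedSpace.exp ((Complex.I * τ) •
        (∑ k : Fin m, (η k : ℂ) • kron H1 (Matrix.single k k 1) + kron H2 1)) -
      NormedSpace.exp ((Complex.I * τ) • kron H2 1) *
        NormedSpace.exp ((Complex.I * τ) •
          ∑ k : Fin m, (η k : ℂ) • kron H1 (Matrix.single k k 1))‖ ≤
      τ ^ 2 / 2 * (⨆ k : Fin m, |η k|) * ‖H1 * H2 - H2 * H1‖ := by
  have hD : IsSelfAdjoint (diagonal fun k => (η k : ℂ)) :=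
    isHermitian_diagonal_of_self_adjoint _ (by ext; simp)
  have hIτ : Complex.I * τ ∈ skewAdjoint ℂ := by simp [skewAdjoint.mem_iff, Complex.conj_ofReal]
  have hIτ_sq : ‖Complex.I * τ * (Complex.I * τ)‖ = τ ^ 2 := by simp; ring
  rw [sum_smul_kron_single, smul_add, add_comm]
  refine (norm_exp_add_sub_exp_mul_exp_le
    ((isSelfAdjoint_kron h2 (IsSelfAdjoint.one _)).smul_mem_skewAdjoint hIτ)
    ((isSelfAdjoint_kron h1 hD).smul_mem_skewAdjoint hIτ)).trans ?_
  rw [smul_mul_smul_comm, smul_mul_smul_comm, ← smul_sub, kron_one_mul_sub_mul_kron_one,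
    norm_smul, hIτ_sq]
  calc τ ^ 2 * ‖kron (H2 * H1 - H1 * H2) _‖ / 2
      ≤ τ ^ 2 * (‖H1 * H2 - H2 * H1‖ * ⨆ k, |η k|) / 2 := by
        gcongr
        refine (norm_kron_le _ _).trans ?_
        rw [norm_sub_rev]
        gcongr
        exact norm_diagonal_ofReal_le η
    _ = τ ^ 2 / 2 * (⨆ k : Fin m, |η k|) * ‖H1 * H2 - H2 * H1‖ := by ring
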